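/- Let Y = ΨD + W with D block-sparse supported on Ω_T, |Ω_T| ≤ P, and Ω̃ a block-index set with |Ω̃| ≤ P, and R = (I − Ψ_{Ω̃}Ψ_{Ω̃}^†)Y. If δ_P + δ_{2P} < 1 then ‖R‖_F ≥ ((1 − δ_P − δ_{2P})/√(1 − δ_P)) · ‖D_{Ω_T∖Ω̃}‖_F − ‖W‖_F. -/

import Mathlib

/-!
Split `D = D₁ + D₂` with `D₁` supported on `Ω_T ∖ Ω̃` and `D₂` on `Ω̃`. The RIP makes the Gram
matrix of `Ψ_Ω̃` invertible, so `Q = Ψ_Ω̃ Ψ_Ω̃^†` is an orthogonal projection fixing the columns of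
`Ψ_Ω̃`; hence `R = (I - Q) Ψ D₁ + (I - Q) W`. Moreover `(I - Q) Ψ D₁ = Ψ (D₁ - E)` for some `E`
supported on `Ω̃`, which is disjoint from the support of `D₁`, so the RIP of order `2P` gives
`‖(I - Q) Ψ D₁‖ ≥ √(1 - δ_{2P}) ‖D₁ - E‖ ≥ √(1 - δ_{2P}) ‖D₁‖`, and `√(1 - δ_{2P})` dominates
`(1 - δ_P - δ_{2P}) / √(1 - δ_P)`. Finally `‖(I - Q) W‖ ≤ ‖W‖`.
-/

open scoped BigOperators
open Matrix
noncomputable section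

variable {Np M L R : ℕ}

/-- Frobenius norm of a complex matrix. -/
def frob {m n : Type*} [Fintype m] [Fintype n] (A : Matrix m n ℂ) : ℝ :=
  Real.sqrt (∑ i, ∑ j, ‖A i j‖ ^ 2)

/-- `D` is block-supported on the block-index set `Ω`. -/
def SuppOn (Ω : Finset (Fin L)) (D : Matrix (Fin L × Fin M) (Fin R) ℂ) : Prop :=
  ∀ p r, p.1 ∉ Ω → D p r = 0

/-- Column-block submatrix `Ψ_Ω` of `Ψ`. -/
def bsub (Ψ : Matrix (Fin Np) (Fin L × Fin M) ℂ) (Ω : Finset (Fin L)) :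
    Matrix (Fin Np) ({l // l ∈ Ω} × Fin M) ℂ :=
  Ψ.submatrix id (fun q => ((q.1 : Fin L), q.2))

/-- Row-block submatrix `D_Ω` of `D`. -/
def rsub (D : Matrix (Fin L × Fin M) (Fin R) ℂ) (Ω : Finset (Fin L)) :
    Matrix ({l // l ∈ Ω} × Fin M) (Fin R) ℂ :=
  D.submatrix (fun q => ((q.1 : Fin L), q.2)) id

/-- Moore–Penrose pseudoinverse `Ψ_Ω^† = (Ψ_Ωᴴ Ψ_Ω)⁻¹ Ψ_Ωᴴ` of the column-block submatrix. -/
def bpinv (Ψ : Matrix (Fin Np) (Fin L × Fin M) ℂ) (Ω : Finset (Fin L)) :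
    Matrix ({l // l ∈ Ω} × Fin M) (Fin Np) ℂ :=
  ((bsub Ψ Ω)ᴴ * bsub Ψ Ω)⁻¹ * (bsub Ψ Ω)ᴴ

/-- Re-embed a matrix indexed by the blocks of `Ω` as a full `ML × R` matrix, zero outside `Ω`. -/
def expand (Ω : Finset (Fin L)) (X : Matrix ({l // l ∈ Ω} × Fin M) (Fin R) ℂ) :
    Matrix (Fin L × Fin M) (Fin R) ℂ :=
  fun p r => if h : p.1 ∈ Ω then X (⟨p.1, h⟩, p.2) r else 0

/-- Structured (block) RIP of order `P` with constant `δ`. -/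
def SRIP (Ψ : Matrix (Fin Np) (Fin L × Fin M) ℂ) (P : ℕ) (δ : ℝ) : Prop :=
  ∀ Ω : Finset (Fin L), Ω.card ≤ P →
    ∀ D : Matrix (Fin L × Fin M) (Fin R) ℂ, SuppOn Ω D →
      (1 - δ) * frob D ^ 2 ≤ frob (Ψ * D) ^ 2 ∧ frob (Ψ * D) ^ 2 ≤ (1 + δ) * frob D ^ 2

section Frobenius

attribute [local instance] Matrix.frobeniusNormedAddCommGroup

variable {m n : Type*} [Fintype m] [Fintype n]

lemma frob_eq_norm (A : Matrix m n ℂ) : frob A = ‖A‖ := by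
  simp only [frob, Matrix.frobenius_norm_def, Real.sqrt_eq_rpow, Real.rpow_two]

lemma frob_nonneg (A : Matrix m n ℂ) : 0 ≤ frob A :=
  Real.sqrt_nonneg _

lemma frob_sq (A : Matrix m n ℂ) : frob A ^ 2 = ∑ i, ∑ j, ‖A i j‖ ^ 2 :=
  Real.sq_sqrt <| Finset.sum_nonneg fun _ _ => Finset.sum_nonneg fun _ _ => sq_nonneg _

@[simp]
lemma frob_zero : frob (0 : Matrix m n ℂ) = 0 := by
  simp [frob]

lemma frob_pos {A : Matrix m n ℂ} (hA : A ≠ 0) : 0 < frob A := by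
  rwa [frob_eq_norm, norm_pos_iff]

lemma frob_eq_zero {A : Matrix m n ℂ} : frob A = 0 ↔ A = 0 := by
  rw [frob_eq_norm, norm_eq_zero]

lemma frob_sub_frob_le_frob_add (A B : Matrix m n ℂ) : frob A - frob B ≤ frob (A + B) := by
  simpa only [frob_eq_norm] using norm_sub_le_norm_add A B

lemma frob_le_frob_of_norm_le {A B : Matrix m n ℂ} (h : ∀ i j, ‖A i j‖ ≤ ‖B i j‖) :
    frob A ≤ frob B :=
  Real.sqrt_le_sqrt <| Finset.sum_le_sum fun i _ => Finset.sum_le_sum fun j _ =>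
    pow_le_pow_left₀ (norm_nonneg _) (h i j) 2

lemma ofReal_frob_sq (A : Matrix m n ℂ) : ((frob A ^ 2 : ℝ) : ℂ) = (Aᴴ * A).trace := by
  rw [frob_sq, Matrix.trace, Finset.sum_comm]
  push_cast
  refine Finset.sum_congr rfl fun j _ => Finset.sum_congr rfl fun i _ => ?_
  simp [Complex.conj_mul']

lemma frob_sq_add_frob_sq [DecidableEq m] {P : Matrix m m ℂ} (hP : IsStarProjection P)
    (W : Matrix m n ℂ) : frob (P * W) ^ 2 + frob ((1 - P) * W) ^ 2 = frob W ^ 2 := by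
  have gram {Q : Matrix m m ℂ} (hQ : IsStarProjection Q) : (Q * W)ᴴ * (Q * W) = Wᴴ * Q * W := by
    rw [conjTranspose_mul, ← star_eq_conjTranspose, hQ.isSelfAdjoint.star_eq, Matrix.mul_assoc,
      ← Matrix.mul_assoc Q, hQ.isIdempotentElem.eq, Matrix.mul_assoc]
  rw [← Complex.ofReal_inj, Complex.ofReal_add, ofReal_frob_sq, ofReal_frob_sq, ofReal_frob_sq,
    gram hP, gram hP.one_sub, ← trace_add, ← Matrix.add_mul, ← Matrix.mul_add, add_sub_cancel,
    Matrix.mul_one]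

lemma frob_mul_le_of_isStarProjection [DecidableEq m] {P : Matrix m m ℂ} (hP : IsStarProjection P)
    (W : Matrix m n ℂ) : frob (P * W) ≤ frob W := by
  have := frob_sq_add_frob_sq hP W
  nlinarith [frob_nonneg (P * W), frob_nonneg W, sq_nonneg (frob ((1 - P) * W))]

end Frobenius

namespace Matrix

variable {m n 𝕜 : Type*} [Fintype m] [Fintype n] [DecidableEq n] [Field 𝕜] [StarRing 𝕜]

-- No invertibility is needed: for a singular Gram matrix `⁻¹` is `0`, and so is the product.
theorem isStarProjection_mul_inv_gram_mul_conjTranspose (B : Matrix m n 𝕜) :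
    IsStarProjection (B * ((Bᴴ * B)⁻¹ * Bᴴ)) := by
  have hG : (Bᴴ * B)ᴴ = Bᴴ * B := (isHermitian_conjTranspose_mul_self B).eq
  refine ⟨?_, ?_⟩
  · have hinv : (Bᴴ * B)⁻¹ * (Bᴴ * B) * (Bᴴ * B)⁻¹ = (Bᴴ * B)⁻¹ := by
      rcases nonsing_inv_cancel_or_zero (Bᴴ * B) with ⟨h, -⟩ | h
      · rw [h, Matrix.one_mul]
      · rw [h, Matrix.zero_mul, Matrix.zero_mul]
    calc B * ((Bᴴ * B)⁻¹ * Bᴴ) * (B * ((Bᴴ * B)⁻¹ * Bᴴ))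
        = B * ((Bᴴ * B)⁻¹ * (Bᴴ * B) * (Bᴴ * B)⁻¹) * Bᴴ := by simp only [Matrix.mul_assoc]
      _ = B * ((Bᴴ * B)⁻¹ * Bᴴ) := by rw [hinv, Matrix.mul_assoc]
  · change (_ * _)ᴴ = _
    rw [conjTranspose_mul, conjTranspose_mul, conjTranspose_nonsing_inv, hG,
      conjTranspose_conjTranspose, Matrix.mul_assoc]

theorem mul_inv_gram_mul_conjTranspose_mul_self (B : Matrix m n 𝕜) (h : IsUnit (Bᴴ * B).det) :
    B * ((Bᴴ * B)⁻¹ * Bᴴ) * B = B := by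
  rw [Matrix.mul_assoc, Matrix.mul_assoc, nonsing_inv_mul _ h, Matrix.mul_one]

end Matrix

section Blocks

lemma sum_eq_sum_blocks {β : Type*} [AddCommMonoid β] (Ω : Finset (Fin L))
    (g : Fin L × Fin M → β) (hg : ∀ p, p.1 ∉ Ω → g p = 0) :
    ∑ p, g p = ∑ q : {l // l ∈ Ω} × Fin M, g (q.1.1, q.2) := by
  rw [Fintype.sum_prod_type, Fintype.sum_prod_type,
    Finset.sum_coe_sort Ω (fun l => ∑ j, g (l, j))]
  exact (Finset.sum_subset (Finset.subset_univ Ω) fun l _ hl =>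
    Finset.sum_eq_zero fun j _ => hg (l, j) hl).symm

lemma suppOn_expand (Ω : Finset (Fin L)) (X : Matrix ({l // l ∈ Ω} × Fin M) (Fin R) ℂ) :
    SuppOn Ω (expand Ω X) :=
  fun _ _ hp => dif_neg hp

lemma mul_expand (Ψ : Matrix (Fin Np) (Fin L × Fin M) ℂ) (Ω : Finset (Fin L))
    (X : Matrix ({l // l ∈ Ω} × Fin M) (Fin R) ℂ) :
    Ψ * expand Ω X = bsub Ψ Ω * X := by
  ext i r
  rw [mul_apply, mul_apply, sum_eq_sum_blocks Ω _ fun p hp => by simp [expand, hp]]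
  exact Finset.sum_congr rfl fun q _ => by simp [expand, bsub, q.1.2]

lemma frob_expand (Ω : Finset (Fin L)) (X : Matrix ({l // l ∈ Ω} × Fin M) (Fin R) ℂ) :
    frob (expand Ω X) = frob X := by
  rw [frob, frob, sum_eq_sum_blocks Ω _ fun p hp => by simp [expand, hp]]
  exact congrArg Real.sqrt <| Finset.sum_congr rfl fun q _ =>
    Finset.sum_congr rfl fun r _ => by simp [expand, q.1.2]

lemma expand_sdiff_add_expand {Ω : Finset (Fin L)} {D : Matrix (Fin L × Fin M) (Fin R) ℂ}
    (hD : SuppOn Ω D) (Ω' : Finset (Fin L)) :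
    expand (Ω \ Ω') (rsub D (Ω \ Ω')) + expand Ω' (rsub D Ω') = D := by
  ext p r
  by_cases h' : p.1 ∈ Ω'
  · simp [expand, rsub, h']
  by_cases h : p.1 ∈ Ω
  · simp [expand, rsub, h, h']
  · simp [expand, h, h', hD p r h]

lemma frob_le_frob_sub_of_disjoint {Ω Ω' : Finset (Fin L)} (hdisj : Disjoint Ω Ω')
    {X E : Matrix (Fin L × Fin M) (Fin R) ℂ} (hX : SuppOn Ω X) (hE : SuppOn Ω' E) :
    frob X ≤ frob (X - E) :=
  frob_le_frob_of_norm_le fun p r => by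
    by_cases h : p.1 ∈ Ω
    · rw [Matrix.sub_apply, hE p r (Finset.disjoint_left.1 hdisj h), sub_zero]
    · simp [hX p r h]

lemma one_sub_mul_mul_eq_mul_expand_sdiff {Ψ : Matrix (Fin Np) (Fin L × Fin M) ℂ}
    {Ω Ω' : Finset (Fin L)} {D : Matrix (Fin L × Fin M) (Fin R) ℂ} (hD : SuppOn Ω D)
    {Q : Matrix (Fin Np) (Fin Np) ℂ} (hQ : Q * bsub Ψ Ω' = bsub Ψ Ω') :
    (1 - Q) * (Ψ * D) = (1 - Q) * (Ψ * expand (Ω \ Ω') (rsub D (Ω \ Ω'))) := by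
  have hker : (1 - Q) * bsub Ψ Ω' = 0 := by rw [Matrix.sub_mul, Matrix.one_mul, hQ, sub_self]
  conv_lhs => rw [← expand_sdiff_add_expand hD Ω', Matrix.mul_add Ψ, mul_expand Ψ Ω']
  rw [Matrix.mul_add, ← Matrix.mul_assoc (1 - Q) (bsub Ψ Ω'), hker, Matrix.zero_mul, add_zero]

end Blocks

namespace SRIP

variable {Ψ : Matrix (Fin Np) (Fin L × Fin M) ℂ} {K : ℕ} {δ : ℝ} {Ω : Finset (Fin L)}
  {X : Matrix (Fin L × Fin M) (Fin R) ℂ}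

theorem nonneg (h : SRIP (R := R) Ψ K δ) (hΩ : Ω.card ≤ K) (hX : SuppOn Ω X) (hX0 : X ≠ 0) :
    0 ≤ δ := by
  obtain ⟨hlo, hhi⟩ := h Ω hΩ X hX
  have : 1 - δ ≤ 1 + δ := le_of_mul_le_mul_right (hlo.trans hhi) (pow_pos (frob_pos hX0) 2)
  linarith

theorem sqrt_mul_frob_le (h : SRIP (R := R) Ψ K δ) (hΩ : Ω.card ≤ K) (hX : SuppOn Ω X) :
    Real.sqrt (1 - δ) * frob X ≤ frob (Ψ * X) := by
  rw [← Real.sqrt_sq (frob_nonneg X), ← Real.sqrt_mul' _ (sq_nonneg _),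
    ← Real.sqrt_sq (frob_nonneg (Ψ * X))]
  exact Real.sqrt_le_sqrt (h Ω hΩ X hX).1

theorem eq_zero_of_bsub_mulVec_eq_zero (h : SRIP (R := R) Ψ K δ) (hδ : δ < 1) (hR : 0 < R)
    (hΩ : Ω.card ≤ K) {v : {l // l ∈ Ω} × Fin M → ℂ} (hv : bsub Ψ Ω *ᵥ v = 0) : v = 0 := by
  set V := replicateCol (Fin R) v
  have hΨV : Ψ * expand Ω V = 0 := by
    rw [mul_expand, ← replicateCol_mulVec, hv, replicateCol_zero]
  have hrip := (h Ω hΩ _ (suppOn_expand Ω V)).1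
  rw [hΨV, frob_zero, frob_expand] at hrip
  have hV : frob V = 0 := by
    by_contra hne
    nlinarith [mul_pos (sub_pos.2 hδ) (pow_pos ((frob_nonneg V).lt_of_ne' hne) 2)]
  have : Nonempty (Fin R) := ⟨⟨0, hR⟩⟩
  simpa [V] using frob_eq_zero.1 hV

open scoped ComplexOrder in
theorem isUnit_det_gram (h : SRIP (R := R) Ψ K δ) (hδ : δ < 1) (hR : 0 < R)
    (hΩ : Ω.card ≤ K) : IsUnit ((bsub Ψ Ω)ᴴ * bsub Ψ Ω).det := by
  rw [isUnit_iff_ne_zero, Ne, ← exists_mulVec_eq_zero_iff]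
  rintro ⟨v, hv, hGv⟩
  exact hv (h.eq_zero_of_bsub_mulVec_eq_zero hδ hR hΩ
    ((conjTranspose_mul_self_mulVec_eq_zero _ _).1 hGv))

theorem sqrt_mul_frob_le_frob_proj_compl (h : SRIP (R := R) Ψ K δ) {Ω' : Finset (Fin L)}
    (hdisj : Disjoint Ω Ω') (hcard : (Ω ∪ Ω').card ≤ K) (hX : SuppOn Ω X) :
    Real.sqrt (1 - δ) * frob X ≤ frob ((1 - bsub Ψ Ω' * bpinv Ψ Ω') * (Ψ * X)) := by
  set E := expand Ω' (bpinv Ψ Ω' * (Ψ * X))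
  have hE : SuppOn Ω' E := suppOn_expand _ _
  have hres : (1 - bsub Ψ Ω' * bpinv Ψ Ω') * (Ψ * X) = Ψ * (X - E) := by
    rw [Matrix.sub_mul, Matrix.one_mul, Matrix.mul_sub, mul_expand, Matrix.mul_assoc]
  have hsupp : SuppOn (Ω ∪ Ω') (X - E) := fun p r hp => by
    rw [Finset.mem_union, not_or] at hp
    rw [Matrix.sub_apply, hX p r hp.1, hE p r hp.2, sub_zero]
  rw [hres]
  calc Real.sqrt (1 - δ) * frob X ≤ Real.sqrt (1 - δ) * frob (X - E) :=
        mul_le_mul_of_nonneg_left (frob_le_frob_sub_of_disjoint hdisj hX hE)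
          (Real.sqrt_nonneg _)
    _ ≤ frob (Ψ * (X - E)) := h.sqrt_mul_frob_le hcard hsupp

end SRIP

lemma div_sqrt_one_sub_le_sqrt_one_sub {a b : ℝ} (ha : 0 ≤ a) (hb : 0 ≤ b) (hab : a + b < 1) :
    (1 - a - b) / Real.sqrt (1 - a) ≤ Real.sqrt (1 - b) := by
  rw [div_le_iff₀ (Real.sqrt_pos.2 (by linarith)), ← Real.sqrt_mul (by linarith),
    Real.le_sqrt (by linarith) (by nlinarith)]
  nlinarith [mul_nonneg ha hb, mul_nonneg (add_nonneg ha hb) (sub_nonneg.2 hab.le)]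

theorem residual_lower_bound_general
    (Ψ : Matrix (Fin Np) (Fin L × Fin M) ℂ) (P : ℕ) (δP δ2P : ℝ)
    (hRIP_P : SRIP (R := R) Ψ P δP) (hRIP_2P : SRIP (R := R) Ψ (2 * P) δ2P)
    (hδsum : δP + δ2P < 1)
    (ΩT Ωtil : Finset (Fin L)) (hcT : ΩT.card ≤ P) (hctil : Ωtil.card ≤ P)
    (D : Matrix (Fin L × Fin M) (Fin R) ℂ) (hD : SuppOn ΩT D)
    (W Y Res : Matrix (Fin Np) (Fin R) ℂ)
    (hY : Y = Ψ * D + W)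
    (hRes : Res = (1 - bsub Ψ Ωtil * bpinv Ψ Ωtil) * Y) :
    ((1 - δP - δ2P) / Real.sqrt (1 - δP)) * frob (rsub D (ΩT \ Ωtil)) - frob W ≤
      frob Res := by
  set D1 := expand (ΩT \ Ωtil) (rsub D (ΩT \ Ωtil))
  have hfD1 : frob D1 = frob (rsub D (ΩT \ Ωtil)) := frob_expand _ _
  obtain hD1 | hD1 := eq_or_ne D1 0
  · rw [← hfD1, hD1, frob_zero, mul_zero, zero_sub]
    linarith [frob_nonneg W, frob_nonneg Res]
  have hcard₁ : (ΩT \ Ωtil).card ≤ P := (Finset.card_le_card Finset.sdiff_subset).trans hcT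
  have hδP := hRIP_P.nonneg hcard₁ (suppOn_expand _ _) hD1
  have hδ2P := hRIP_2P.nonneg (hcard₁.trans (by omega)) (suppOn_expand _ _) hD1
  have hR : 0 < R := Nat.pos_of_ne_zero (by rintro rfl; exact hD1 (Subsingleton.elim _ _))
  set Q := bsub Ψ Ωtil * bpinv Ψ Ωtil
  have hQ : IsStarProjection Q := isStarProjection_mul_inv_gram_mul_conjTranspose _
  have hQB : Q * bsub Ψ Ωtil = bsub Ψ Ωtil :=
    mul_inv_gram_mul_conjTranspose_mul_self _ (hRIP_P.isUnit_det_gram (by linarith) hR hctil)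
  have hRes' : Res = (1 - Q) * (Ψ * D1) + (1 - Q) * W := by
    rw [hRes, hY, Matrix.mul_add, one_sub_mul_mul_eq_mul_expand_sdiff hD hQB]
  have hcard : ((ΩT \ Ωtil) ∪ Ωtil).card ≤ 2 * P := by
    rw [Finset.sdiff_union_self_eq_union]
    exact (Finset.card_union_le _ _).trans (by omega)
  calc (1 - δP - δ2P) / Real.sqrt (1 - δP) * frob (rsub D (ΩT \ Ωtil)) - frob W
      ≤ Real.sqrt (1 - δ2P) * frob D1 - frob W := by
        rw [hfD1]
        exact sub_le_sub_right (mul_le_mul_of_nonneg_right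
          (div_sqrt_one_sub_le_sqrt_one_sub hδP hδ2P hδsum) (frob_nonneg _)) _
    _ ≤ frob ((1 - Q) * (Ψ * D1)) - frob ((1 - Q) * W) :=
        sub_le_sub (hRIP_2P.sqrt_mul_frob_le_frob_proj_compl Finset.sdiff_disjoint hcard
          (suppOn_expand _ _)) (frob_mul_le_of_isStarProjection hQ.one_sub W)
    _ ≤ frob Res := hRes' ▸ frob_sub_frob_le_frob_add _ _

/-- residual lower bound
`‖R‖_F ≥ ((1 − δ_P − δ_{2P})/√(1 − δ_P)) ‖D_{Ω_T∖Ω̃}‖_F − ‖W‖_F`. -/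
theorem residual_lower_bound
    (Ψ : Matrix (Fin Np) (Fin L × Fin M) ℂ) (P : ℕ) (δP δ2P : ℝ)
    (hRIP_P : SRIP (R := R) Ψ P δP) (hRIP_2P : SRIP (R := R) Ψ (2 * P) δ2P)
    (hmono : δP ≤ δ2P) (hδsum : δP + δ2P < 1)
    (ΩT Ωtil : Finset (Fin L)) (hcT : ΩT.card ≤ P) (hctil : Ωtil.card ≤ P)
    (D : Matrix (Fin L × Fin M) (Fin R) ℂ) (hD : SuppOn ΩT D)
    (W Y Res : Matrix (Fin Np) (Fin R) ℂ)
    (hY : Y = Ψ * D + W)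
    (hRes : Res = (1 - bsub Ψ Ωtil * bpinv Ψ Ωtil) * Y) :
    ((1 - δP - δ2P) / Real.sqrt (1 - δP)) * frob (rsub D (ΩT \ Ωtil)) - frob W ≤
      frob Res :=
  residual_lower_bound_general Ψ P δP δ2P hRIP_P hRIP_2P hδsum ΩT Ωtil hcT hctil D hD W Y Res hY
    hRes
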